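/- arXiv:2202.09763 — 12 statements merged into one kernel-verified Lean document; each statement's English description precedes it below -/
import Mathlib

section
/- Let n ≥ 1, t > 0, C an n×n real cost matrix, and X an n×n matrix with all entries positive satisfying M(X) = (1_n, 1_n). If there exists ν = (u,v) ∈ ℝ^n × ℝ^n such that t·X_{ij}·(C_{ij} − u_i − v_j) = 1 for all i,j (in particular u_i + v_j < C_{ij} for all i,j), then X is a global minimizer of the log-barrier objective X' ↦ ⟨C, X'⟩ − t^{-1}·Σ_{i,j} log X'_{ij} over all entrywise-positive n×n matrices X' with M(X') = (1_n, 1_n). -/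
open Finset

lemma marg_sum (n : ℕ) (u v : Fin n → ℝ) (Y : Matrix (Fin n) (Fin n) ℝ)
    (hrow : ∀ i, ∑ j, Y i j = 1) (hcol : ∀ j, ∑ i, Y i j = 1) :
    ∑ i, ∑ j, (u i + v j) * Y i j = (∑ i, u i) + (∑ j, v j) := by
  have : ∀ i, ∑ j, (u i + v j) * Y i j = u i + ∑ j, v j * Y i j := by
    intro i
    simp [add_mul, Finset.sum_add_distrib, ← Finset.mul_sum, hrow i]
  simp only [this, Finset.sum_add_distrib]
  congr 1
  rw [Finset.sum_comm]
  simp [← Finset.mul_sum, hcol]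

/-- If there exists a dual vector `ν = (u,v)` with
`t·X_{ij}·(C_{ij} − u_i − v_j) = 1` for all `i,j`, then the entrywise-positive
doubly stochastic matrix `X` globally minimizes the log-barrier objective
`X' ↦ ⟨C,X'⟩ − t⁻¹ Σ log X'_{ij}` over entrywise-positive matrices with unit
row and column sums. -/
theorem stmt0 (n : ℕ) (hn : 1 ≤ n) (t : ℝ) (ht : 0 < t)
    (C X : Matrix (Fin n) (Fin n) ℝ)
    (hXpos : ∀ i j, 0 < X i j)
    (hrow : ∀ i, ∑ j, X i j = 1) (hcol : ∀ j, ∑ i, X i j = 1)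
    (hdual : ∃ u v : Fin n → ℝ, ∀ i j, t * X i j * (C i j - u i - v j) = 1) :
    ∀ X' : Matrix (Fin n) (Fin n) ℝ,
      (∀ i j, 0 < X' i j) → (∀ i, ∑ j, X' i j = 1) → (∀ j, ∑ i, X' i j = 1) →
      (∑ i, ∑ j, C i j * X i j) - t⁻¹ * (∑ i, ∑ j, Real.log (X i j)) ≤
        (∑ i, ∑ j, C i j * X' i j) - t⁻¹ * (∑ i, ∑ j, Real.log (X' i j)) := by
  obtain ⟨u, v, hd⟩ := hdual
  intro X' hpos hrow' hcol'
  -- key pointwise inequality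
  have key : ∀ i j,
      (C i j - u i - v j) * X i j - t⁻¹ * Real.log (X i j) ≤
      (C i j - u i - v j) * X' i j - t⁻¹ * Real.log (X' i j) := by
    intro i j
    have ha := hXpos i j
    have hb := hpos i j
    have hg : C i j - u i - v j = 1 / (t * X i j) := by
      rw [eq_div_iff (by positivity)]
      linear_combination hd i j
    have hlog : Real.log (X' i j / X i j) ≤ X' i j / X i j - 1 :=
      Real.log_le_sub_one_of_pos (by positivity)
    rw [Real.log_div hb.ne' ha.ne'] at hlog
    rw [hg]
    have h1 : 1 / (t * X i j) * X i j = t⁻¹ := by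
      field_simp
    have h2 : 1 / (t * X i j) * X' i j = t⁻¹ * (X' i j / X i j) := by
      field_simp
    rw [h1, h2]
    have ht' : 0 < t⁻¹ := by positivity
    nlinarith [mul_le_mul_of_nonneg_left hlog ht'.le]
  -- decompose the cost sums
  have e : ∀ (Y : Matrix (Fin n) (Fin n) ℝ), (∀ i, ∑ j, Y i j = 1) →
      (∀ j, ∑ i, Y i j = 1) →
      ∑ i, ∑ j, C i j * Y i j =
        (∑ i, ∑ j, (C i j - u i - v j) * Y i j) + ((∑ i, u i) + (∑ j, v j)) := by
    intro Y h1 h2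
    rw [← marg_sum n u v Y h1 h2, ← Finset.sum_add_distrib]
    congr 1; ext i
    rw [← Finset.sum_add_distrib]
    congr 1; ext j
    ring
  rw [e X hrow hcol, e X' hrow' hcol']
  have : ∀ (Y : Matrix (Fin n) (Fin n) ℝ),
      (∑ i, ∑ j, (C i j - u i - v j) * Y i j) + ((∑ i, u i) + (∑ j, v j))
        - t⁻¹ * (∑ i, ∑ j, Real.log (Y i j)) =
      (∑ i, ∑ j, ((C i j - u i - v j) * Y i j - t⁻¹ * Real.log (Y i j)))
        + ((∑ i, u i) + (∑ j, v j)) := by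
    intro Y
    simp only [Finset.sum_sub_distrib, Finset.mul_sum]
    ring
  rw [this X, this X']
  have hs : (∑ i, ∑ j, ((C i j - u i - v j) * X i j - t⁻¹ * Real.log (X i j))) ≤
      ∑ i, ∑ j, ((C i j - u i - v j) * X' i j - t⁻¹ * Real.log (X' i j)) :=
    Finset.sum_le_sum fun i _ => Finset.sum_le_sum fun j _ => key i j
  linarith
end

section
/- Let n ≥ 1, let Σ'' ⊆ {1,…,n}×{1,…,n} be any index set, and let σ be a permutation of {1,…,n}. Set Σ' = {(i, σ(i)) : i = 1,…,n} and Σ''' = {(σ^{-1}(j), σ(i)) : (i,j) ∈ Σ''}. Then the union Σ = Σ' ∪ Σ'' ∪ Σ''' has total support: for every (i,j) ∈ Σ there exists a permutation τ of {1,…,n} with τ(i) = j and (k, τ(k)) ∈ Σ for all k = 1,…,n. -/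
/-- For any index set `Σ''` and any permutation `σ`, the union of the
diagonal `Σ' = {(i,σ(i))}`, the set `Σ''`, and the reflected set
`Σ''' = {(σ⁻¹(j), σ(i)) : (i,j) ∈ Σ''}` has total support: every element of the
union lies on a diagonal (graph of a permutation) contained in the union. -/
theorem stmt2 (n : ℕ) (S'' : Set (Fin n × Fin n)) (σ : Equiv.Perm (Fin n))
    (S : Set (Fin n × Fin n))
    (hS : S = {p | ∃ i, p = (i, σ i)} ∪ S''
        ∪ {p | ∃ i j, (i, j) ∈ S'' ∧ p = (σ.symm j, σ i)}) :
    ∀ p ∈ S, ∃ τ : Equiv.Perm (Fin n), τ p.1 = p.2 ∧ ∀ k, (k, τ k) ∈ S := by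
  have key : ∀ i j : Fin n, (i, j) ∈ S'' →
      ∃ τ : Equiv.Perm (Fin n),
        τ i = j ∧ τ (σ.symm j) = σ i ∧ ∀ k, (k, τ k) ∈ S := by
    intro i j hij
    refine ⟨(Equiv.swap i (σ.symm j)).trans σ, ?_, ?_, ?_⟩
    · simp [Equiv.swap_apply_left]
    · simp only [Equiv.trans_apply, Equiv.swap_apply_right]
    · intro k
      by_cases h1 : k = i
      · subst h1
        simp only [Equiv.trans_apply, Equiv.swap_apply_left, Equiv.apply_symm_apply]
        rw [hS]; exact Or.inl (Or.inr hij)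
      · by_cases h2 : k = σ.symm j
        · subst h2
          simp only [Equiv.trans_apply, Equiv.swap_apply_right]
          rw [hS]; exact Or.inr ⟨i, j, hij, rfl⟩
        · rw [hS]
          exact Or.inl (Or.inl ⟨k, by simp [Equiv.swap_apply_of_ne_of_ne h1 h2]⟩)
  intro p hp
  rw [hS] at hp
  rcases hp with (⟨i, rfl⟩ | hp) | ⟨i, j, hij, rfl⟩
  · exact ⟨σ, rfl, fun k => by rw [hS]; exact Or.inl (Or.inl ⟨k, rfl⟩)⟩
  · obtain ⟨τ, h1, _, h3⟩ := key p.1 p.2 hp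
    exact ⟨τ, h1, h3⟩
  · obtain ⟨τ, _, h2, h3⟩ := key i j hij
    exact ⟨τ, h2, h3⟩
end

section
/- Let A be a nonnegative n×n real matrix. For every (y,z) ∈ ℝ^n × ℝ^n and every w = (w¹, w²) ∈ ℝ^n × ℝ^n, the Hessian quadratic form satisfies ⟨w, H(y,z) w⟩ = Σ_{i,j} A_{ij} e^{y_i + z_j} (w¹_i + w²_j)² ≥ 0; in particular H(y,z) is positive semidefinite and the function f is convex on ℝ^n × ℝ^n. -/
/-!
Expanding the blocks, `⟨w, H w⟩ = Σ_{i,j} B_{ij} (w¹_i² + 2 w¹_i w²_j + w²_j²)` because the diagonal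
blocks carry the row and column sums of `B`; this is a sum of squares with weights
`B_{ij} = A_{ij} e^{y_i + z_j} ≥ 0`. Convexity of `f` is direct: each `A_{ij} e^{y_i + z_j}` is a
nonnegative multiple of `exp` composed with a linear form, and the remaining terms are linear.
-/

open Finset Matrix

theorem ConvexOn.finset_sum {𝕜 E β ι : Type*} [Semiring 𝕜] [PartialOrder 𝕜] [AddCommMonoid E]
    [AddCommMonoid β] [PartialOrder β] [IsOrderedAddMonoid β] [SMul 𝕜 E] [DistribSMul 𝕜 β]
    {s : Set E} {t : Finset ι} {f : ι → E → β} (hs : Convex 𝕜 s)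
    (hf : ∀ i ∈ t, ConvexOn 𝕜 s (f i)) : ConvexOn 𝕜 s fun x => ∑ i ∈ t, f i x := by
  refine ⟨hs, fun x hx y hy a b ha hb hab => ?_⟩
  calc ∑ i ∈ t, f i (a • x + b • y) ≤ ∑ i ∈ t, (a • f i x + b • f i y) :=
        sum_le_sum fun i hi => (hf i hi).2 hx hy ha hb hab
    _ = a • ∑ i ∈ t, f i x + b • ∑ i ∈ t, f i y := by
        rw [sum_add_distrib, smul_sum, smul_sum]

theorem ConcaveOn.finset_sum {𝕜 E β ι : Type*} [Semiring 𝕜] [PartialOrder 𝕜] [AddCommMonoid E]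
    [AddCommMonoid β] [PartialOrder β] [IsOrderedAddMonoid β] [SMul 𝕜 E] [DistribSMul 𝕜 β]
    {s : Set E} {t : Finset ι} {f : ι → E → β} (hs : Convex 𝕜 s)
    (hf : ∀ i ∈ t, ConcaveOn 𝕜 s (f i)) : ConcaveOn 𝕜 s fun x => ∑ i ∈ t, f i x :=
  ConvexOn.finset_sum (β := βᵒᵈ) hs hf

namespace Matrix

variable {m n R : Type*} [Fintype m] [Fintype n] [DecidableEq m] [DecidableEq n]

/-- The Hessian `H(y, z)` of `f`, in terms of the scaled matrix `B = A(y, z)`. -/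
def scalingHessian [AddCommMonoid R] (B : Matrix m n R) : Matrix (m ⊕ n) (m ⊕ n) R :=
  fromBlocks (diagonal fun i => ∑ j, B i j) B Bᵀ (diagonal fun j => ∑ i, B i j)

theorem sum_elim_dotProduct_scalingHessian_mulVec [CommRing R] (B : Matrix m n R)
    (u : m → R) (v : n → R) :
    Sum.elim u v ⬝ᵥ (scalingHessian B *ᵥ Sum.elim u v) = ∑ i, ∑ j, B i j * (u i + v j) ^ 2 := by
  have expand (i : m) (j : n) : B i j * (u i + v j) ^ 2 =
      u i * (B i j * u i) + u i * (B i j * v j) + (v j * (B i j * u i) + v j * (B i j * v j)) := by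
    ring
  rw [scalingHessian, fromBlocks_mulVec, Sum.elim_comp_inl, Sum.elim_comp_inr,
    sumElim_dotProduct_sumElim]
  simp only [dotProduct, Pi.add_apply, mulVec_diagonal]
  simp only [mulVec, dotProduct, transpose_apply, mul_add, sum_mul, mul_sum, sum_add_distrib,
    expand]
  congr 2 <;> exact sum_comm

theorem scalingHessian_posSemidef {B : Matrix m n ℝ} (hB : ∀ i j, 0 ≤ B i j) :
    (scalingHessian B).PosSemidef := by
  refine posSemidef_iff_dotProduct_mulVec.2 ⟨?_, fun x => ?_⟩
  · exact isHermitian_iff_isSymm.2 <|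
      (isSymm_diagonal _).fromBlocks rfl (isSymm_diagonal _)
  · rw [star_trivial, ← Sum.elim_comp_inl_inr x, sum_elim_dotProduct_scalingHessian_mulVec]
    exact sum_nonneg fun i _ => sum_nonneg fun j _ => mul_nonneg (hB i j) (sq_nonneg _)

end Matrix

theorem convexOn_sum_mul_exp_add {m n : Type*} [Fintype m] [Fintype n] {A : Matrix m n ℝ}
    (hA : ∀ i j, 0 ≤ A i j) :
    ConvexOn ℝ Set.univ fun p : (m → ℝ) × (n → ℝ) => ∑ i, ∑ j, A i j * Real.exp (p.1 i + p.2 j) :=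
  ConvexOn.finset_sum convex_univ fun i _ => ConvexOn.finset_sum convex_univ fun j _ =>
    (convexOn_exp.comp_linearMap (LinearMap.proj i ∘ₗ LinearMap.fst ℝ (m → ℝ) (n → ℝ)
      + LinearMap.proj j ∘ₗ LinearMap.snd ℝ (m → ℝ) (n → ℝ))).smul (hA i j)

/-- for a nonnegative matrix `A`, the Hessian of the negative-entropy
dual objective `f(y,z) = Σ A_{ij} e^{y_i+z_j} − Σ y_i − Σ z_j` satisfies
`⟨w, H(y,z) w⟩ = Σ_{i,j} A_{ij} e^{y_i+z_j} (w¹_i + w²_j)² ≥ 0`; in particular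
`H(y,z)` is positive semidefinite and `f` is convex. -/
theorem stmt4 (n : ℕ) (A : Matrix (Fin n) (Fin n) ℝ) (hA : ∀ i j, 0 ≤ A i j)
    (y z w₁ w₂ : Fin n → ℝ)
    (B : Matrix (Fin n) (Fin n) ℝ)
    (hB : ∀ i j, B i j = A i j * Real.exp (y i + z j))
    (H : Matrix (Fin n ⊕ Fin n) (Fin n ⊕ Fin n) ℝ)
    (hH : H = Matrix.fromBlocks
      (Matrix.diagonal fun i => ∑ j, B i j) B
      Bᵀ (Matrix.diagonal fun j => ∑ i, B i j)) :
    (Sum.elim w₁ w₂ ⬝ᵥ (H *ᵥ Sum.elim w₁ w₂)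
        = ∑ i, ∑ j, A i j * Real.exp (y i + z j) * (w₁ i + w₂ j) ^ 2)
    ∧ (0 ≤ ∑ i, ∑ j, A i j * Real.exp (y i + z j) * (w₁ i + w₂ j) ^ 2)
    ∧ H.PosSemidef
    ∧ ConvexOn ℝ Set.univ (fun p : (Fin n → ℝ) × (Fin n → ℝ) =>
        (∑ i, ∑ j, A i j * Real.exp (p.1 i + p.2 j)) - (∑ i, p.1 i) - ∑ j, p.2 j) := by
  have hH : H = scalingHessian B := hH
  have hBnonneg : ∀ i j, 0 ≤ B i j := fun i j => hB i j ▸ mul_nonneg (hA i j) (Real.exp_nonneg _)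
  simp only [← hB]
  refine ⟨?_, ?_, hH ▸ scalingHessian_posSemidef hBnonneg, ?_⟩
  · rw [hH, sum_elim_dotProduct_scalingHessian_mulVec]
  · exact sum_nonneg fun i _ => sum_nonneg fun j _ => mul_nonneg (hBnonneg i j) (sq_nonneg _)
  · let V := Fin n → ℝ
    have sum_fst : ConcaveOn ℝ Set.univ fun p : V × V => ∑ i, p.1 i :=
      ConcaveOn.finset_sum convex_univ fun i _ =>
        (LinearMap.proj (R := ℝ) i ∘ₗ LinearMap.fst ℝ V V).concaveOn convex_univ
    have sum_snd : ConcaveOn ℝ Set.univ fun p : V × V => ∑ j, p.2 j :=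
      ConcaveOn.finset_sum convex_univ fun j _ =>
        (LinearMap.proj (R := ℝ) j ∘ₗ LinearMap.snd ℝ V V).concaveOn convex_univ
    exact ((convexOn_sum_mul_exp_add hA).sub sum_fst).sub sum_snd
end

section
/- Let A be a nonnegative n×n real matrix and (y,z) ∈ ℝ^n × ℝ^n. Then (y,z) is a global minimizer of f over ℝ^n × ℝ^n if and only if the scaled matrix A(y,z) = diag(e^y) A diag(e^z) (entries A_{ij} e^{y_i+z_j}) is doubly stochastic, i.e., all of its row sums and column sums equal 1. -/
/-!
Since `e^x ≥ 1 + x`, the objective lies above each of its tangent planes, and its gradient at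
`(y, z)` is (row sums - 1, column sums - 1) of the scaled matrix; so a doubly stochastic scaling
is a global minimum. Conversely, moving `y i` alone by `t` changes the objective by
`(e^t - 1) r - t`, `r` the `i`-th row sum, which is nonnegative for every `t` only when `r = 1`;
columns follow by transposing.
-/

open Finset Real
open scoped Matrix

namespace MatrixScaling

variable {ι κ : Type*}

noncomputable def scaled (A : Matrix ι κ ℝ) (y : ι → ℝ) (z : κ → ℝ) : Matrix ι κ ℝ :=
  Matrix.of fun i j => A i j * exp (y i + z j)

@[simp]
lemma scaled_apply (A : Matrix ι κ ℝ) (y : ι → ℝ) (z : κ → ℝ) (i : ι) (j : κ) :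
    scaled A y z i j = A i j * exp (y i + z j) :=
  rfl

lemma scaled_transpose (A : Matrix ι κ ℝ) (y : ι → ℝ) (z : κ → ℝ) :
    scaled Aᵀ z y = (scaled A y z)ᵀ := by
  ext j i
  simp [add_comm]

variable [Fintype ι] [Fintype κ]

noncomputable def objective (A : Matrix ι κ ℝ) (y : ι → ℝ) (z : κ → ℝ) : ℝ :=
  ∑ i, ∑ j, scaled A y z i j - ∑ i, y i - ∑ j, z j

lemma objective_transpose (A : Matrix ι κ ℝ) (y : ι → ℝ) (z : κ → ℝ) :
    objective Aᵀ z y = objective A y z := by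
  simp only [objective, scaled_transpose, Matrix.transpose_apply]
  rw [sum_comm, sub_right_comm]

lemma objective_add_single_left [DecidableEq ι] (A : Matrix ι κ ℝ) (y : ι → ℝ) (z : κ → ℝ)
    (i₀ : ι) (t : ℝ) :
    objective A (y + Pi.single i₀ t) z
      = objective A y z + (exp t - 1) * ∑ j, scaled A y z i₀ j - t := by
  have hrow : ∀ i, ∑ j, scaled A (y + Pi.single i₀ t) z i j
      = ∑ j, scaled A y z i j + if i = i₀ then (exp t - 1) * ∑ j, scaled A y z i₀ j else 0 := by
    intro i
    rcases eq_or_ne i i₀ with rfl | hi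
    · simp only [scaled_apply, Pi.add_apply, Pi.single_eq_same, if_true, mul_sum,
        ← sum_add_distrib, add_right_comm _ t, exp_add]
      exact sum_congr rfl fun j _ => by ring
    · simp [hi]
  simp only [objective, hrow, sum_add_distrib, sum_ite_eq', mem_univ, if_true, Pi.add_apply,
    sum_pi_single']
  ring

lemma eq_one_of_forall_le_exp_sub_one_mul {r : ℝ} (h : ∀ t, t ≤ (exp t - 1) * r) : r = 1 := by
  have hr : 0 < r := by nlinarith [h 1, add_one_le_exp 1]
  by_contra hne
  have hlog := h (-log r)
  rw [exp_neg, exp_log hr, sub_mul, inv_mul_cancel₀ hr.ne'] at hlog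
  linarith [log_lt_sub_one_of_pos hr hne]

lemma sum_scaled_row_eq_one_of_isMin {A : Matrix ι κ ℝ} {y : ι → ℝ} {z : κ → ℝ}
    (hmin : ∀ y' z', objective A y z ≤ objective A y' z') (i : ι) :
    ∑ j, scaled A y z i j = 1 := by
  classical
  refine eq_one_of_forall_le_exp_sub_one_mul fun t => ?_
  have := hmin (y + Pi.single i t) z
  rw [objective_add_single_left] at this
  linarith

lemma sum_scaled_col_eq_one_of_isMin {A : Matrix ι κ ℝ} {y : ι → ℝ} {z : κ → ℝ}
    (hmin : ∀ y' z', objective A y z ≤ objective A y' z') (j : κ) :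
    ∑ i, scaled A y z i j = 1 := by
  have hminT : ∀ z' y', objective Aᵀ z y ≤ objective Aᵀ z' y' := by
    simpa only [objective_transpose] using fun z' y' => hmin y' z'
  simpa only [scaled_transpose, Matrix.transpose_apply] using
    sum_scaled_row_eq_one_of_isMin hminT j

lemma objective_add_gradient_le {A : Matrix ι κ ℝ} (hA : ∀ i j, 0 ≤ A i j)
    (y y' : ι → ℝ) (z z' : κ → ℝ) :
    objective A y z + ∑ i, (∑ j, scaled A y z i j - 1) * (y' i - y i)
        + ∑ j, (∑ i, scaled A y z i j - 1) * (z' j - z j) ≤ objective A y' z' := by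
  have hterm : ∀ i j,
      scaled A y z i j * (1 + (y' i - y i) + (z' j - z j)) ≤ scaled A y' z' i j := by
    intro i j
    have hexp : exp (y' i + z' j) = exp (y i + z j) * exp ((y' i - y i) + (z' j - z j)) := by
      rw [← exp_add]; ring_nf
    rw [scaled_apply, scaled_apply, hexp, ← mul_assoc]
    gcongr
    · exact mul_nonneg (hA i j) (exp_pos _).le
    · linarith [add_one_le_exp ((y' i - y i) + (z' j - z j))]
  have hsum := sum_le_sum fun i (_ : i ∈ univ) => sum_le_sum fun j (_ : j ∈ univ) => hterm i j
  simp only [mul_add, mul_one, sum_add_distrib] at hsum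
  rw [sum_comm (f := fun i j => scaled A y z i j * (z' j - z j))] at hsum
  simp only [← sum_mul] at hsum
  simp only [objective, sub_one_mul, sum_sub_distrib]
  linarith

lemma forall_objective_le_iff {A : Matrix ι κ ℝ} (hA : ∀ i j, 0 ≤ A i j)
    (y : ι → ℝ) (z : κ → ℝ) :
    (∀ y' z', objective A y z ≤ objective A y' z') ↔
      (∀ i, ∑ j, scaled A y z i j = 1) ∧ ∀ j, ∑ i, scaled A y z i j = 1 := by
  refine ⟨fun hmin => ⟨sum_scaled_row_eq_one_of_isMin hmin, sum_scaled_col_eq_one_of_isMin hmin⟩,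
    fun ⟨hrow, hcol⟩ y' z' => ?_⟩
  simpa only [hrow, hcol, sub_self, zero_mul, sum_const_zero, add_zero] using
    objective_add_gradient_le hA y y' z z'

end MatrixScaling

/-- `(y,z)` is a global minimizer of
`f(y,z) = Σ A_{ij} e^{y_i+z_j} − Σ y_i − Σ z_j` if and only if the scaled matrix
with entries `A_{ij} e^{y_i+z_j}` is doubly stochastic. -/
theorem stmt5 (n : ℕ) (A : Matrix (Fin n) (Fin n) ℝ) (hA : ∀ i j, 0 ≤ A i j)
    (y z : Fin n → ℝ) :
    (∀ y' z' : Fin n → ℝ,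
        (∑ i, ∑ j, A i j * Real.exp (y i + z j)) - (∑ i, y i) - (∑ j, z j) ≤
          (∑ i, ∑ j, A i j * Real.exp (y' i + z' j)) - (∑ i, y' i) - ∑ j, z' j)
    ↔ ((∀ i, ∑ j, A i j * Real.exp (y i + z j) = 1)
        ∧ ∀ j, ∑ i, A i j * Real.exp (y i + z j) = 1) :=
  MatrixScaling.forall_objective_le_iff hA y z
end

section
/- Let A be a nonnegative n×n real matrix with support and let (y,z) ∈ ℝ^n × ℝ^n satisfy ∇f(y,z) ≠ 0. Then every solution w of the Newton system H(y,z) w = −∇f(y,z) satisfies ⟨w, H(y,z) w⟩ > 0; that is, the squared Newton decrement is strictly positive. -/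
open Finset Matrix

/-- if the nonnegative matrix `A` has support and `∇f(y,z) ≠ 0`, then
every solution `w` of the Newton system `H(y,z) w = −∇f(y,z)` has strictly
positive squared Newton decrement `⟨w, H(y,z) w⟩ > 0`. -/
theorem stmt7 (n : ℕ) (A : Matrix (Fin n) (Fin n) ℝ) (hA : ∀ i j, 0 ≤ A i j)
    (hsupp : ∃ σ : Equiv.Perm (Fin n), ∀ i, 0 < A i (σ i))
    (y z : Fin n → ℝ)
    (B : Matrix (Fin n) (Fin n) ℝ)
    (hB : ∀ i j, B i j = A i j * Real.exp (y i + z j))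
    (H : Matrix (Fin n ⊕ Fin n) (Fin n ⊕ Fin n) ℝ)
    (hH : H = Matrix.fromBlocks
      (Matrix.diagonal fun i => ∑ j, B i j) B
      Bᵀ (Matrix.diagonal fun j => ∑ i, B i j))
    (grad : Fin n ⊕ Fin n → ℝ)
    (hgrad : grad = Sum.elim (fun i => (∑ j, B i j) - 1) fun j => (∑ i, B i j) - 1)
    (hne : grad ≠ 0) :
    ∀ w : Fin n ⊕ Fin n → ℝ, H *ᵥ w = -grad → 0 < w ⬝ᵥ (H *ᵥ w) := by
  intro w hw
  have hBnn : ∀ i j, 0 ≤ B i j := fun i j => by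
    rw [hB]; exact mul_nonneg (hA i j) (Real.exp_pos _).le
  -- quadratic form identity
  have hmvl : ∀ i, (H *ᵥ w) (Sum.inl i) = ∑ j, B i j * (w (Sum.inl i) + w (Sum.inr j)) := by
    intro i
    simp [hH, Matrix.mulVec, dotProduct, Fintype.sum_sum_type,
      Matrix.fromBlocks, Matrix.diagonal_apply, Finset.mul_sum, Finset.sum_mul, mul_add,
      Finset.sum_add_distrib, mul_comm]
  have hmvr : ∀ j, (H *ᵥ w) (Sum.inr j) = ∑ i, B i j * (w (Sum.inl i) + w (Sum.inr j)) := by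
    intro j
    simp [hH, Matrix.mulVec, dotProduct, Fintype.sum_sum_type,
      Matrix.fromBlocks, Matrix.diagonal_apply, Matrix.transpose_apply,
      Finset.mul_sum, Finset.sum_mul, mul_add, Finset.sum_add_distrib, mul_comm]
  have key : w ⬝ᵥ (H *ᵥ w) = ∑ i, ∑ j, B i j * (w (Sum.inl i) + w (Sum.inr j))^2 := by
    rw [dotProduct, Fintype.sum_sum_type]
    simp only [hmvl, hmvr]
    simp only [Finset.mul_sum]
    rw [Finset.sum_comm (s := Finset.univ) (t := Finset.univ)
      (f := fun x i => w (Sum.inr x) * (B i x * (w (Sum.inl i) + w (Sum.inr x))))]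
    rw [← Finset.sum_add_distrib]
    refine Finset.sum_congr rfl fun i _ => ?_
    rw [← Finset.sum_add_distrib]
    exact Finset.sum_congr rfl fun j _ => by ring
  -- nonnegativity of the quadratic form
  have hnn : 0 ≤ w ⬝ᵥ (H *ᵥ w) := by
    rw [key]
    exact Finset.sum_nonneg fun i _ => Finset.sum_nonneg fun j _ =>
      mul_nonneg (hBnn i j) (sq_nonneg _)
  rcases lt_or_eq_of_le hnn with h | h
  · exact h
  -- each term is zero
  have hterm : ∀ i j, B i j * (w (Sum.inl i) + w (Sum.inr j)) = 0 := by
    have h0 : ∀ i ∈ Finset.univ, ∀ j ∈ (Finset.univ : Finset (Fin n)),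
        B i j * (w (Sum.inl i) + w (Sum.inr j))^2 = 0 := by
      have := (Finset.sum_eq_zero_iff_of_nonneg (fun i _ =>
        Finset.sum_nonneg fun j _ => mul_nonneg (hBnn i j) (sq_nonneg _))).mp
        (key ▸ h.symm)
      intro i hi j hj
      exact (Finset.sum_eq_zero_iff_of_nonneg (fun j _ =>
        mul_nonneg (hBnn i j) (sq_nonneg _))).mp (this i hi) j hj
    intro i j
    rcases mul_eq_zero.mp (h0 i (Finset.mem_univ i) j (Finset.mem_univ j)) with hb | hs
    · rw [hb, zero_mul]
    · rw [pow_eq_zero_iff (by norm_num) |>.mp hs, mul_zero]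
  have hHw : H *ᵥ w = 0 := by
    funext a
    cases a with
    | inl i => rw [hmvl]; exact Finset.sum_eq_zero fun j _ => hterm i j
    | inr j => rw [hmvr]; exact Finset.sum_eq_zero fun i _ => hterm i j
  exact absurd (by rw [← neg_neg grad, ← hw, hHw, neg_zero]) hne
end

section
/- Let A be a nonnegative n×n real matrix with support, let Ã = [[0, A],[A^T, 0]] be its symmetric (2n)×(2n) embedding, and let C = diag(Ã 1_{2n}). Then C + Ã is symmetric positive semidefinite, and the linear system (C + Ã) y = (Ã − I_{2n}) 1_{2n} has a solution y ∈ ℝ^{2n}. -/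
/-!
`C + Ã` is the signless Laplacian `L` of the weighted graph with adjacency matrix `Ã`, and
`2 xᵀ L x = ∑ᵢⱼ Ãᵢⱼ (xᵢ + xⱼ)²`, so `L` is positive semidefinite and every `k ∈ ker L` satisfies
`kᵢ = -kⱼ` along each edge. The support of `A` is a perfect matching of the bipartite graph, so
such a `k` sums to zero, i.e. `𝟙 ⊥ ker L = (range L)ᗮ`. Hence `L y = 𝟙` is solvable, and since
`L 𝟙 = 2 Ã 𝟙`, the vector `𝟙 / 2 - y` solves `L w = (Ã - I) 𝟙`.
-/

open Finset Matrix

variable {ι : Type*} [Fintype ι]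

theorem sum_eq_zero_of_inl_add_inr_perm_eq_zero {R : Type*} [AddCommMonoid R] {k : ι ⊕ ι → R}
    (σ : Equiv.Perm ι) (hk : ∀ i, k (.inl i) + k (.inr (σ i)) = 0) : ∑ x, k x = 0 := by
  rw [Fintype.sum_sum_type, ← Equiv.sum_comp σ fun j => k (.inr j), ← sum_add_distrib]
  exact sum_eq_zero fun i _ => hk i

variable [DecidableEq ι]

theorem Matrix.IsHermitian.exists_mulVec_eq_of_forall_ker {𝕜 : Type*} [RCLike 𝕜]
    {M : Matrix ι ι 𝕜} (hM : M.IsHermitian) {v : ι → 𝕜}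
    (hv : ∀ k, M *ᵥ k = 0 → star k ⬝ᵥ v = 0) : ∃ y, M *ᵥ y = v := by
  have hv' : WithLp.toLp 2 v ∈ (toEuclideanLin M).kerᗮ := by
    rw [Submodule.mem_orthogonal]
    intro k hk
    rw [EuclideanSpace.inner_eq_star_dotProduct, dotProduct_comm]
    exact hv k.ofLp (by simpa using congrArg WithLp.ofLp hk)
  rw [LinearMap.orthogonal_ker, ← toEuclideanLin_conjTranspose_eq_adjoint, hM.eq] at hv'
  obtain ⟨y, hy⟩ := hv'
  exact ⟨y.ofLp, by simpa using congrArg WithLp.ofLp hy⟩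

def signlessLaplacian {R : Type*} [CommRing R] (W : Matrix ι ι R) : Matrix ι ι R :=
  diagonal (W *ᵥ 1) + W

section CommRing

variable {R : Type*} [CommRing R] {W : Matrix ι ι R}

theorem signlessLaplacian_mulVec_apply (x : ι → R) (i : ι) :
    (signlessLaplacian W *ᵥ x) i = ∑ j, W i j * (x i + x j) := by
  rw [signlessLaplacian, add_mulVec, Pi.add_apply, mulVec_diagonal]
  simp only [mulVec, dotProduct, Pi.one_apply, mul_one, Finset.sum_mul, mul_add,
    Finset.sum_add_distrib]

theorem signlessLaplacian_mulVec_one : signlessLaplacian W *ᵥ 1 = W *ᵥ 1 + W *ᵥ 1 := by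
  ext i
  rw [signlessLaplacian_mulVec_apply, Pi.add_apply]
  simp only [mulVec, dotProduct, Pi.one_apply, ← Finset.sum_add_distrib, mul_add]

theorem isSymm_signlessLaplacian (hW : W.IsSymm) : (signlessLaplacian W).IsSymm :=
  (isSymm_diagonal _).add hW

theorem two_mul_dotProduct_signlessLaplacian_mulVec (hW : W.IsSymm) (x : ι → R) :
    2 * (x ⬝ᵥ signlessLaplacian W *ᵥ x) = ∑ i, ∑ j, W i j * (x i + x j) ^ 2 := by
  have hquad : x ⬝ᵥ signlessLaplacian W *ᵥ x = ∑ i, ∑ j, W i j * (x i * (x i + x j)) := by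
    simp only [dotProduct, signlessLaplacian_mulVec_apply, Finset.mul_sum, mul_left_comm]
  have hswap :
      ∑ i, ∑ j, W i j * (x i * (x i + x j)) = ∑ i, ∑ j, W i j * (x j * (x i + x j)) := by
    rw [Finset.sum_comm]
    simp only [hW.apply, add_comm]
  rw [two_mul, hquad]
  nth_rewrite 2 [hswap]
  simp only [← Finset.sum_add_distrib, ← mul_add, ← add_mul, sq]

end CommRing

section Nonneg

variable {W : Matrix ι ι ℝ} (hW : W.IsSymm) (hW₀ : ∀ i j, 0 ≤ W i j)
include hW hW₀

theorem posSemidef_signlessLaplacian : (signlessLaplacian W).PosSemidef := by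
  refine .of_dotProduct_mulVec_nonneg (isHermitian_iff_isSymm.mpr (isSymm_signlessLaplacian hW))
    fun x => ?_
  have hsum : 0 ≤ ∑ i, ∑ j, W i j * (x i + x j) ^ 2 :=
    sum_nonneg fun i _ => sum_nonneg fun j _ => mul_nonneg (hW₀ i j) (sq_nonneg _)
  rw [star_trivial]
  linarith [two_mul_dotProduct_signlessLaplacian_mulVec hW x]

theorem add_eq_zero_of_signlessLaplacian_mulVec_eq_zero {k : ι → ℝ}
    (hk : signlessLaplacian W *ᵥ k = 0) {i j : ι} (hij : W i j ≠ 0) : k i + k j = 0 := by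
  have hsum := two_mul_dotProduct_signlessLaplacian_mulVec hW k
  rw [hk, dotProduct_zero, mul_zero, eq_comm] at hsum
  have hterm_nonneg : ∀ i j, 0 ≤ W i j * (k i + k j) ^ 2 := fun i j =>
    mul_nonneg (hW₀ i j) (sq_nonneg _)
  have hrow := (sum_eq_zero_iff_of_nonneg fun i _ => sum_nonneg fun j _ => hterm_nonneg i j).mp
    hsum i (mem_univ i)
  have hterm := (sum_eq_zero_iff_of_nonneg fun j _ => hterm_nonneg i j).mp hrow j (mem_univ j)
  exact (pow_eq_zero_iff two_ne_zero).mp ((mul_eq_zero.mp hterm).resolve_left hij)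

end Nonneg

/-- for a nonnegative matrix `A` with support, with symmetric
embedding `Ã = [[0,A],[Aᵀ,0]]` and `C = diag(Ã 1)`, the matrix `C + Ã` is
symmetric positive semidefinite and the system `(C + Ã) y = (Ã − I) 1` is
consistent. -/
theorem stmt8 (n : ℕ) (A : Matrix (Fin n) (Fin n) ℝ) (hA : ∀ i j, 0 ≤ A i j)
    (hsupp : ∃ σ : Equiv.Perm (Fin n), ∀ i, 0 < A i (σ i))
    (Atil : Matrix (Fin n ⊕ Fin n) (Fin n ⊕ Fin n) ℝ)
    (hAtil : Atil = Matrix.fromBlocks 0 A Aᵀ 0)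
    (Cm : Matrix (Fin n ⊕ Fin n) (Fin n ⊕ Fin n) ℝ)
    (hCm : Cm = Matrix.diagonal (Atil *ᵥ fun _ => (1 : ℝ))) :
    (Cm + Atil).PosSemidef ∧
      ∃ w : Fin n ⊕ Fin n → ℝ, (Cm + Atil) *ᵥ w = (Atil - 1) *ᵥ fun _ => (1 : ℝ) := by
  obtain ⟨σ, hσ⟩ := hsupp
  subst hCm hAtil
  set W := fromBlocks 0 A Aᵀ 0
  have hW : W.IsSymm := IsSymm.fromBlocks isSymm_zero rfl isSymm_zero
  have hW₀ : ∀ i j, 0 ≤ W i j := by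
    rintro (i | i) (j | j) <;> simp [W, hA]
  change (signlessLaplacian W).PosSemidef ∧ ∃ w, signlessLaplacian W *ᵥ w = (W - 1) *ᵥ 1
  refine ⟨posSemidef_signlessLaplacian hW hW₀, ?_⟩
  have hker (k) (hk : signlessLaplacian W *ᵥ k = 0) : star k ⬝ᵥ 1 = 0 := by
    rw [star_trivial, dotProduct_one]
    exact sum_eq_zero_of_inl_add_inr_perm_eq_zero σ fun i =>
      add_eq_zero_of_signlessLaplacian_mulVec_eq_zero hW hW₀ hk (hσ i).ne'
  have hL : (signlessLaplacian W).IsHermitian :=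
    isHermitian_iff_isSymm.mpr (isSymm_signlessLaplacian hW)
  obtain ⟨y, hy⟩ := hL.exists_mulVec_eq_of_forall_ker hker
  refine ⟨(2⁻¹ : ℝ) • 1 - y, ?_⟩
  rw [mulVec_sub, mulVec_smul, signlessLaplacian_mulVec_one, hy, sub_mulVec, one_mulVec]
  ext i
  simp only [Pi.sub_apply, Pi.smul_apply, Pi.add_apply, smul_eq_mul]
  ring
end

section
/- Let A be a nonnegative n×n real matrix with support, Ã = [[0, A],[A^T, 0]] its symmetric (2n)×(2n) embedding, and C = diag(Ã 1_{2n}). Then for every vector w = (w¹, w²) ∈ ℝ^n × ℝ^n in the null space of C + Ã and every pair of entrywise-positive vectors (p,q) ∈ ℝ^n × ℝ^n, one has g(p ⊙ e^{w¹}, q ⊙ e^{w²}) = g(p, q), where ⊙ denotes the entrywise product and e^{w} the entrywise exponential; i.e., g is constant along null directions of C + Ã. -/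
open Finset Matrix

/-- for a nonnegative matrix `A` with support, the log-barrier
objective `g(p,q) = Σ A_{ij} p_i q_j − Σ log p_i − Σ log q_j` is constant along
null directions of `C + Ã`: if `(C + Ã) w = 0`, then
`g(p ⊙ e^{w¹}, q ⊙ e^{w²}) = g(p,q)` for all entrywise-positive `p, q`. -/
theorem stmt9 (n : ℕ) (A : Matrix (Fin n) (Fin n) ℝ) (hA : ∀ i j, 0 ≤ A i j)
    (hsupp : ∃ σ : Equiv.Perm (Fin n), ∀ i, 0 < A i (σ i))
    (Atil : Matrix (Fin n ⊕ Fin n) (Fin n ⊕ Fin n) ℝ)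
    (hAtil : Atil = Matrix.fromBlocks 0 A Aᵀ 0)
    (Cm : Matrix (Fin n ⊕ Fin n) (Fin n ⊕ Fin n) ℝ)
    (hCm : Cm = Matrix.diagonal (Atil *ᵥ fun _ => (1 : ℝ)))
    (w : Fin n ⊕ Fin n → ℝ) (hw : (Cm + Atil) *ᵥ w = 0)
    (p q : Fin n → ℝ) (hp : ∀ i, 0 < p i) (hq : ∀ j, 0 < q j) :
    (∑ i, ∑ j, A i j * (p i * Real.exp (w (Sum.inl i))) * (q j * Real.exp (w (Sum.inr j))))
        - (∑ i, Real.log (p i * Real.exp (w (Sum.inl i))))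
        - (∑ j, Real.log (q j * Real.exp (w (Sum.inr j))))
      = (∑ i, ∑ j, A i j * p i * q j) - (∑ i, Real.log (p i)) - ∑ j, Real.log (q j) := by
  subst hAtil hCm
  set At : Matrix (Fin n ⊕ Fin n) (Fin n ⊕ Fin n) ℝ := Matrix.fromBlocks 0 A Aᵀ 0 with hAt
  have hAt_nonneg : ∀ x y, 0 ≤ At x y := by
    rintro (i|i) (j|j) <;> simp [hAt, hA i j, hA j i]
  have hAt_symm : ∀ x y, At x y = At y x := by
    rintro (i|i) (j|j) <;> simp [hAt]
  -- row identity: ∑_y At x y * (w x + w y) = 0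
  have hrow : ∀ x, ∑ y, At x y * (w x + w y) = 0 := by
    intro x
    have h := congrFun hw x
    rw [Matrix.add_mulVec] at h
    rw [Pi.add_apply, Matrix.mulVec_diagonal] at h
    simp only [Matrix.mulVec, dotProduct, Pi.zero_apply, mul_one] at h
    calc ∑ y, At x y * (w x + w y)
        = (∑ y, At x y) * w x + ∑ y, At x y * w y := by
          rw [Finset.sum_mul, ← Finset.sum_add_distrib]
          exact Finset.sum_congr rfl fun y _ => by ring
      _ = 0 := h
  have hS : ∑ x, ∑ y, At x y * (w x + w y)^2 = 0 := by
    have h1 : ∑ x, ∑ y, At x y * (w x + w y) * w x = 0 := by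
      refine Finset.sum_eq_zero fun x _ => ?_
      rw [← Finset.sum_mul, hrow, zero_mul]
    have h2 : ∑ x, ∑ y, At x y * (w x + w y) * w y = 0 := by
      rw [Finset.sum_comm]
      refine Finset.sum_eq_zero fun y _ => ?_
      have : ∑ x, At x y * (w x + w y) * w y = (∑ x, At y x * (w y + w x)) * w y := by
        rw [Finset.sum_mul]
        exact Finset.sum_congr rfl fun x _ => by rw [hAt_symm x y, add_comm]
      rw [this, hrow, zero_mul]
    have expand : (∑ x, ∑ y, At x y * (w x + w y)^2)
        = (∑ x, ∑ y, At x y * (w x + w y) * w x) + ∑ x, ∑ y, At x y * (w x + w y) * w y := by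
      rw [← Finset.sum_add_distrib]
      refine Finset.sum_congr rfl fun x _ => ?_
      rw [← Finset.sum_add_distrib]
      exact Finset.sum_congr rfl fun y _ => by ring
    rw [expand, h1, h2, add_zero]
  have hterm : ∀ x y, At x y * (w x + w y)^2 = 0 := by
    have outer := (Finset.sum_eq_zero_iff_of_nonneg (fun x _ =>
      Finset.sum_nonneg fun y _ => mul_nonneg (hAt_nonneg x y) (sq_nonneg _))).mp hS
    intro x y
    have inner := (Finset.sum_eq_zero_iff_of_nonneg (fun y _ =>
      mul_nonneg (hAt_nonneg x y) (sq_nonneg _))).mp (outer x (Finset.mem_univ x))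
    exact inner y (Finset.mem_univ y)
  have key : ∀ i j, 0 < A i j → w (Sum.inl i) + w (Sum.inr j) = 0 := by
    intro i j hij
    have h := hterm (Sum.inl i) (Sum.inr j)
    have hAval : At (Sum.inl i) (Sum.inr j) = A i j := by simp [hAt]
    rw [hAval] at h
    have := (mul_eq_zero.mp h).resolve_left hij.ne'
    exact pow_eq_zero_iff (by norm_num)|>.mp this
  have hsum0 : (∑ i, w (Sum.inl i)) + ∑ j, w (Sum.inr j) = 0 := by
    obtain ⟨σ, hσ⟩ := hsupp
    have hperm : ∑ j, w (Sum.inr j) = ∑ i, w (Sum.inr (σ i)) :=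
      (Equiv.sum_comp σ (fun j => w (Sum.inr j))).symm
    rw [hperm, ← Finset.sum_add_distrib]
    exact Finset.sum_eq_zero fun i _ => key i (σ i) (hσ i)
  have hquad : ∀ i j, A i j * (p i * Real.exp (w (Sum.inl i))) * (q j * Real.exp (w (Sum.inr j)))
      = A i j * p i * q j := by
    intro i j
    rcases eq_or_lt_of_le (hA i j) with h | h
    · rw [← h]; ring
    · have hw0 := key i j h
      have hexp : Real.exp (w (Sum.inl i)) * Real.exp (w (Sum.inr j)) = 1 := by
        rw [← Real.exp_add, hw0, Real.exp_zero]
      calc A i j * (p i * Real.exp (w (Sum.inl i))) * (q j * Real.exp (w (Sum.inr j)))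
          = A i j * p i * q j * (Real.exp (w (Sum.inl i)) * Real.exp (w (Sum.inr j))) := by ring
        _ = A i j * p i * q j := by rw [hexp, mul_one]
  have e1 : (∑ i, ∑ j, A i j * (p i * Real.exp (w (Sum.inl i))) * (q j * Real.exp (w (Sum.inr j))))
      = ∑ i, ∑ j, A i j * p i * q j :=
    Finset.sum_congr rfl fun i _ => Finset.sum_congr rfl fun j _ => hquad i j
  have e2 : (∑ i, Real.log (p i * Real.exp (w (Sum.inl i))))
      = (∑ i, Real.log (p i)) + ∑ i, w (Sum.inl i) := by
    rw [← Finset.sum_add_distrib]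
    exact Finset.sum_congr rfl fun i _ => by
      rw [Real.log_mul (hp i).ne' (Real.exp_ne_zero _), Real.log_exp]
  have e3 : (∑ j, Real.log (q j * Real.exp (w (Sum.inr j))))
      = (∑ j, Real.log (q j)) + ∑ j, w (Sum.inr j) := by
    rw [← Finset.sum_add_distrib]
    exact Finset.sum_congr rfl fun j _ => by
      rw [Real.log_mul (hq j).ne' (Real.exp_ne_zero _), Real.log_exp]
  rw [e1, e2, e3]
  linarith [hsum0]
end

section
/- Let A be a nonnegative n×n real matrix with support and let ζ = (p,q) ∈ ℝ^n × ℝ^n be entrywise positive. Let A' = diag(ζ) Ã diag(ζ) (the symmetric (2n)×(2n) embedding of the scaled matrix diag(p) A diag(q)), let C' = diag(A' 1_{2n}), and let b = (A' − I_{2n}) 1_{2n}. Suppose b ≠ 0 and w ∈ ℝ^{2n} solves (C' + A') w = b. Then ⟨b, w⟩ > 0, and the directional derivative of g at ζ in the direction u = −ζ ⊙ w equals (d/dα) g(ζ + α u)|_{α=0} = −⟨b, w⟩ < 0; in particular u is a strict descent direction for g. -/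
open Finset Matrix

/-!
Write `M = A'` (symmetric, nonnegative) and `D = diag(M 1)`. Each row of `(D + M) w` is
`∑ c, M a c * (w a + w c)`, so by symmetry `2 ⟨(D + M) w, w⟩ = ∑ a c, M a c * (w a + w c) ^ 2 ≥ 0`,
and equality forces every `M a c * (w a + w c)` to vanish, i.e. `(D + M) w = 0`.
For the derivative, `∂_u log ζ_a = u_a / ζ_a = -w_a`, while the bilinear part of `g` contributes
`-∑ i j, p i * A i j * q j * (w (inl i) + w (inr j)) = -⟨A' 1, w⟩`; together this is `-⟨(A' - I) 1, w⟩`.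
-/

section QuadraticForm

variable {ι R : Type*} [Fintype ι] [DecidableEq ι]

lemma diagonal_mulVec_one_add_mulVec_apply [CommSemiring R] (M : Matrix ι ι R) (w : ι → R)
    (a : ι) :
    ((diagonal (M *ᵥ fun _ => 1) + M) *ᵥ w) a = ∑ c, M a c * (w a + w c) := by
  rw [add_mulVec, Pi.add_apply, mulVec_diagonal]
  simp only [mulVec, dotProduct, mul_one, sum_mul, mul_add, sum_add_distrib]

lemma two_mul_diagonal_mulVec_one_add_mulVec_dotProduct [CommRing R] (M : Matrix ι ι R)
    (hM : Mᵀ = M) (w : ι → R) :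
    2 * (((diagonal (M *ᵥ fun _ => 1) + M) *ᵥ w) ⬝ᵥ w) = ∑ a, ∑ c, M a c * (w a + w c) ^ 2 := by
  have hswap : ∑ a, ∑ c, M a c * (w a + w c) * w a = ∑ a, ∑ c, M a c * (w a + w c) * w c := by
    rw [sum_comm]
    refine sum_congr rfl fun a _ => sum_congr rfl fun c _ => ?_
    rw [← transpose_apply M a c, hM]
    ring
  calc 2 * (((diagonal (M *ᵥ fun _ => 1) + M) *ᵥ w) ⬝ᵥ w)
      = ∑ a, ∑ c, M a c * (w a + w c) * w a + ∑ a, ∑ c, M a c * (w a + w c) * w c := by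
        simp only [dotProduct, diagonal_mulVec_one_add_mulVec_apply, sum_mul]
        rw [← hswap]
        ring
    _ = ∑ a, ∑ c, M a c * (w a + w c) ^ 2 := by
        simp only [← sum_add_distrib]
        exact sum_congr rfl fun a _ => sum_congr rfl fun c _ => by ring

lemma diagonal_mulVec_one_add_mulVec_dotProduct_pos (M : Matrix ι ι ℝ) (hM : Mᵀ = M)
    (hM₀ : ∀ a c, 0 ≤ M a c) {w : ι → ℝ} (hw : (diagonal (M *ᵥ fun _ => 1) + M) *ᵥ w ≠ 0) :
    0 < ((diagonal (M *ᵥ fun _ => 1) + M) *ᵥ w) ⬝ᵥ w := by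
  have hterm₀ : ∀ a c, 0 ≤ M a c * (w a + w c) ^ 2 := fun a c => mul_nonneg (hM₀ a c) (sq_nonneg _)
  have hsum₀ : 0 ≤ ∑ a, ∑ c, M a c * (w a + w c) ^ 2 :=
    sum_nonneg fun a _ => sum_nonneg fun c _ => hterm₀ a c
  have hidentity := two_mul_diagonal_mulVec_one_add_mulVec_dotProduct M hM w
  refine lt_of_le_of_ne (by linarith) fun hzero => hw (funext fun a => ?_)
  have hvanish : ∀ a c, M a c * (w a + w c) ^ 2 = 0 := by
    have hsum : ∑ a, ∑ c, M a c * (w a + w c) ^ 2 = 0 := by rw [← hidentity, ← hzero, mul_zero]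
    intro a c
    rw [sum_eq_zero_iff_of_nonneg fun a _ => sum_nonneg fun c _ => hterm₀ a c] at hsum
    exact (sum_eq_zero_iff_of_nonneg fun c _ => hterm₀ a c).mp (hsum a (mem_univ a)) c (mem_univ c)
  rw [diagonal_mulVec_one_add_mulVec_apply, Pi.zero_apply]
  refine sum_eq_zero fun c _ => ?_
  rcases mul_eq_zero.mp (hvanish a c) with h | h
  · rw [h, zero_mul]
  · rw [pow_eq_zero_iff two_ne_zero |>.mp h, mul_zero]

end QuadraticForm

lemma fromBlocks_zero_transpose_mulVec_one_dotProduct {ι κ R : Type*} [Fintype ι] [Fintype κ]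
    [CommSemiring R] (B : Matrix ι κ R) (w : ι ⊕ κ → R) :
    (fromBlocks 0 B Bᵀ 0 *ᵥ fun _ => 1) ⬝ᵥ w = ∑ i, ∑ j, B i j * (w (Sum.inl i) + w (Sum.inr j)) := by
  simp only [dotProduct, Fintype.sum_sum_type, mulVec, fromBlocks_apply₁₁, fromBlocks_apply₁₂,
    fromBlocks_apply₂₁, fromBlocks_apply₂₂, Matrix.zero_apply, transpose_apply, mul_one,
    sum_const_zero, zero_add, add_zero, sum_mul, mul_add, sum_add_distrib]
  rw [sum_comm (f := fun j i => B i j * w (Sum.inr j))]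

/-- The objective `g(p, q)`, with `(p, q)` stored as a single vector on `ι ⊕ κ`. -/
noncomputable def logBarrier {ι κ : Type*} [Fintype ι] [Fintype κ] (A : Matrix ι κ ℝ)
    (ζ : ι ⊕ κ → ℝ) : ℝ :=
  (∑ i, ∑ j, A i j * ζ (Sum.inl i) * ζ (Sum.inr j)) - ∑ a, Real.log (ζ a)

lemma hasDerivAt_logBarrier_line {ι κ : Type*} [Fintype ι] [Fintype κ] (A : Matrix ι κ ℝ)
    {ζ : ι ⊕ κ → ℝ} (hζ : ∀ a, ζ a ≠ 0) (u : ι ⊕ κ → ℝ) :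
    HasDerivAt (fun α : ℝ => logBarrier A (ζ + α • u))
      ((∑ i, ∑ j, A i j * (u (Sum.inl i) * ζ (Sum.inr j) + ζ (Sum.inl i) * u (Sum.inr j)))
        - ∑ a, u a / ζ a) 0 := by
  have hline : ∀ a, HasDerivAt (fun α : ℝ => (ζ + α • u) a) (u a) 0 := fun a => by
    simpa using ((hasDerivAt_id (0 : ℝ)).mul_const (u a)).const_add (ζ a)
  have hbilinear : ∀ i j, HasDerivAt
      (fun α : ℝ => A i j * (ζ + α • u) (Sum.inl i) * (ζ + α • u) (Sum.inr j))
      (A i j * (u (Sum.inl i) * ζ (Sum.inr j) + ζ (Sum.inl i) * u (Sum.inr j))) 0 := fun i j => by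
    refine (((hline (Sum.inl i)).const_mul (A i j)).mul (hline (Sum.inr j))).congr_deriv ?_
    simp only [zero_smul, add_zero]
    ring
  have hlog : ∀ a, HasDerivAt (fun α : ℝ => Real.log ((ζ + α • u) a)) (u a / ζ a) 0 := fun a => by
    simpa using (hline a).log (by simpa using hζ a)
  exact (HasDerivAt.fun_sum fun i _ => HasDerivAt.fun_sum fun j _ => hbilinear i j).sub
    (HasDerivAt.fun_sum fun a _ => hlog a)

theorem stmt10_general (n : ℕ) (A : Matrix (Fin n) (Fin n) ℝ) (hA : ∀ i j, 0 ≤ A i j)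
    (p q : Fin n → ℝ) (hp : ∀ i, 0 < p i) (hq : ∀ j, 0 < q j)
    (ζ : Fin n ⊕ Fin n → ℝ) (hζ : ζ = Sum.elim p q)
    (Atil : Matrix (Fin n ⊕ Fin n) (Fin n ⊕ Fin n) ℝ)
    (hAtil : Atil = Matrix.fromBlocks 0 A Aᵀ 0)
    (A' : Matrix (Fin n ⊕ Fin n) (Fin n ⊕ Fin n) ℝ)
    (hA' : ∀ a b, A' a b = ζ a * Atil a b * ζ b)
    (C' : Matrix (Fin n ⊕ Fin n) (Fin n ⊕ Fin n) ℝ)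
    (hC' : C' = Matrix.diagonal (A' *ᵥ fun _ => (1 : ℝ)))
    (b : Fin n ⊕ Fin n → ℝ) (hb : b = (A' - 1) *ᵥ fun _ => (1 : ℝ))
    (hbne : b ≠ 0)
    (w : Fin n ⊕ Fin n → ℝ) (hw : (C' + A') *ᵥ w = b)
    (u : Fin n ⊕ Fin n → ℝ) (hu : ∀ a, u a = -(ζ a * w a)) :
    0 < b ⬝ᵥ w ∧
      HasDerivAt
        (fun α : ℝ =>
          (∑ i, ∑ j, A i j * (ζ + α • u) (Sum.inl i) * (ζ + α • u) (Sum.inr j))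
            - ∑ a, Real.log ((ζ + α • u) a))
        (-(b ⬝ᵥ w)) 0 := by
  have hζpos : ∀ a, 0 < ζ a := by
    rintro (i | j) <;> simp [hζ, hp, hq]
  set B : Matrix (Fin n) (Fin n) ℝ := of fun i j => p i * A i j * q j
  have hA'B : A' = fromBlocks 0 B Bᵀ 0 := by
    ext (i | i) (j | j) <;> simp [B, hA', hAtil, hζ]
    ring
  have hsymm : A'ᵀ = A' := by
    rw [hA'B, fromBlocks_transpose, transpose_transpose, transpose_zero]
  have hnonneg : ∀ a c, 0 ≤ A' a c := by
    rw [hA'B]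
    rintro (i | i) (j | j) <;> simp only [fromBlocks_apply₁₁, fromBlocks_apply₁₂,
      fromBlocks_apply₂₁, fromBlocks_apply₂₂, Matrix.zero_apply, transpose_apply, of_apply, B, le_refl]
    exacts [mul_nonneg (mul_nonneg (hp i).le (hA i j)) (hq j).le,
      mul_nonneg (mul_nonneg (hp j).le (hA j i)) (hq i).le]
  have hbw : b ⬝ᵥ w = ∑ i, ∑ j, B i j * (w (Sum.inl i) + w (Sum.inr j)) - ∑ a, w a := by
    rw [hb, sub_mulVec, one_mulVec, sub_dotProduct, hA'B,
      fromBlocks_zero_transpose_mulVec_one_dotProduct]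
    simp [dotProduct]
  refine ⟨?_, ?_⟩
  · subst hC' hw
    exact diagonal_mulVec_one_add_mulVec_dotProduct_pos A' hsymm hnonneg hbne
  · refine (hasDerivAt_logBarrier_line A (fun a => (hζpos a).ne') u).congr_deriv ?_
    have hquot : ∀ a, u a / ζ a = -w a := fun a => by
      rw [hu, neg_div, mul_div_cancel_left₀ _ (hζpos a).ne']
    have hbilinear : ∑ i, ∑ j, A i j * (u (Sum.inl i) * ζ (Sum.inr j) + ζ (Sum.inl i) * u (Sum.inr j))
        = -∑ i, ∑ j, B i j * (w (Sum.inl i) + w (Sum.inr j)) := by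
      simp only [← sum_neg_distrib]
      refine sum_congr rfl fun i _ => sum_congr rfl fun j _ => ?_
      simp only [hu, hζ, B, Sum.elim_inl, Sum.elim_inr, of_apply]
      ring
    rw [hbilinear, hbw]
    simp only [hquot, sum_neg_distrib]
    ring

/-- for a nonnegative matrix `A` with support and a positive scaling
vector `ζ = (p,q)`, let `A' = diag(ζ) Ã diag(ζ)`, `C' = diag(A' 1)` and
`b = (A' − I) 1`.  If `b ≠ 0` and `(C' + A') w = b`, then `⟨b, w⟩ > 0` and the
directional derivative of the log-barrier objective `g` at `ζ` in the direction
`u = −ζ ⊙ w` equals `−⟨b, w⟩ < 0`, so `u` is a strict descent direction. -/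
theorem stmt10 (n : ℕ) (A : Matrix (Fin n) (Fin n) ℝ) (hA : ∀ i j, 0 ≤ A i j)
    (hsupp : ∃ σ : Equiv.Perm (Fin n), ∀ i, 0 < A i (σ i))
    (p q : Fin n → ℝ) (hp : ∀ i, 0 < p i) (hq : ∀ j, 0 < q j)
    (ζ : Fin n ⊕ Fin n → ℝ) (hζ : ζ = Sum.elim p q)
    (Atil : Matrix (Fin n ⊕ Fin n) (Fin n ⊕ Fin n) ℝ)
    (hAtil : Atil = Matrix.fromBlocks 0 A Aᵀ 0)
    (A' : Matrix (Fin n ⊕ Fin n) (Fin n ⊕ Fin n) ℝ)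
    (hA' : ∀ a b, A' a b = ζ a * Atil a b * ζ b)
    (C' : Matrix (Fin n ⊕ Fin n) (Fin n ⊕ Fin n) ℝ)
    (hC' : C' = Matrix.diagonal (A' *ᵥ fun _ => (1 : ℝ)))
    (b : Fin n ⊕ Fin n → ℝ) (hb : b = (A' - 1) *ᵥ fun _ => (1 : ℝ))
    (hbne : b ≠ 0)
    (w : Fin n ⊕ Fin n → ℝ) (hw : (C' + A') *ᵥ w = b)
    (u : Fin n ⊕ Fin n → ℝ) (hu : ∀ a, u a = -(ζ a * w a)) :
    0 < b ⬝ᵥ w ∧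
      HasDerivAt
        (fun α : ℝ =>
          (∑ i, ∑ j, A i j * (ζ + α • u) (Sum.inl i) * (ζ + α • u) (Sum.inr j))
            - ∑ a, Real.log ((ζ + α • u) a))
        (-(b ⬝ᵥ w)) 0 :=
  stmt10_general n A hA p q hp hq ζ hζ Atil hAtil A' hA' C' hC' b hb hbne w hw u hu
end

section
/- Let A be a nonnegative n×n real matrix with total support, let δ > 0 satisfy A_{ij} ≥ δ for every (i,j) with A_{ij} > 0, and let c₀ ∈ ℝ. Suppose (p,q) is a pair of entrywise-positive vectors with g(p,q) ≤ c₀. Then for every (i,j) with A_{ij} > 0: (a) A_{ij}·p_i·q_j − log(p_i·q_j) ≤ c₀ − (n−1)(1 + log δ), and (b) p_i·q_j ≥ exp(−c₀ + (n−1)(1 + log δ)). -/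
open Finset

lemma key_lb (a x : ℝ) (ha : 0 < a) (hx : 0 < x) :
    1 + Real.log a ≤ a * x - Real.log x := by
  have h := Real.log_le_sub_one_of_pos (mul_pos ha hx)
  rw [Real.log_mul ha.ne' hx.ne'] at h
  linarith

/-- for a nonnegative matrix `A` with total support whose positive
entries are bounded below by `δ`, any entrywise-positive `(p,q)` in the
`c₀`-sublevel set of the log-barrier objective `g` satisfies, for every positive
entry `A_{ij} > 0`:
(a) `A_{ij} p_i q_j − log(p_i q_j) ≤ c₀ − (n−1)(1 + log δ)` and
(b) `p_i q_j ≥ exp(−c₀ + (n−1)(1 + log δ))`. -/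
theorem stmt11 (n : ℕ) (A : Matrix (Fin n) (Fin n) ℝ) (hA : ∀ i j, 0 ≤ A i j)
    (htot : (∃ i j, 0 < A i j) ∧ ∀ i j, 0 < A i j →
      ∃ σ : Equiv.Perm (Fin n), σ i = j ∧ ∀ k, 0 < A k (σ k))
    (δ : ℝ) (hδ : 0 < δ) (hδA : ∀ i j, 0 < A i j → δ ≤ A i j)
    (c₀ : ℝ) (p q : Fin n → ℝ) (hp : ∀ i, 0 < p i) (hq : ∀ j, 0 < q j)
    (hg : (∑ i, ∑ j, A i j * p i * q j) - (∑ i, Real.log (p i))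
        - (∑ j, Real.log (q j)) ≤ c₀) :
    ∀ i j, 0 < A i j →
      (A i j * p i * q j - Real.log (p i * q j)
          ≤ c₀ - ((n : ℝ) - 1) * (1 + Real.log δ))
      ∧ Real.exp (-c₀ + ((n : ℝ) - 1) * (1 + Real.log δ)) ≤ p i * q j := by
  intro i j hij
  obtain ⟨σ, hσi, hσpos⟩ := htot.2 i j hij
  set f : Fin n → ℝ := fun k => A k (σ k) * p k * q (σ k)
      - Real.log (p k) - Real.log (q (σ k)) with hf
  -- each f k ≥ 1 + log δ
  have hfk : ∀ k, 1 + Real.log δ ≤ f k := by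
    intro k
    have h1 : 1 + Real.log (A k (σ k)) ≤ A k (σ k) * (p k * q (σ k))
        - Real.log (p k * q (σ k)) :=
      key_lb _ _ (hσpos k) (mul_pos (hp k) (hq (σ k)))
    have h2 : Real.log δ ≤ Real.log (A k (σ k)) :=
      Real.log_le_log hδ (hδA _ _ (hσpos k))
    have h3 : Real.log (p k * q (σ k)) = Real.log (p k) + Real.log (q (σ k)) :=
      Real.log_mul (hp k).ne' (hq (σ k)).ne'
    simp only [hf]
    rw [mul_assoc]
    linarith
  -- sum of f ≤ g ≤ c₀
  have hsum : ∑ k, f k ≤ c₀ := by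
    have h1 : ∑ k, A k (σ k) * p k * q (σ k) ≤ ∑ i, ∑ j, A i j * p i * q j := by
      apply Finset.sum_le_sum
      intro k _
      exact Finset.single_le_sum
        (fun l _ => mul_nonneg (mul_nonneg (hA k l) (hp k).le) (hq l).le)
        (Finset.mem_univ (σ k))
    have h2 : ∑ k, Real.log (q (σ k)) = ∑ j, Real.log (q j) :=
      Equiv.sum_comp σ fun j => Real.log (q j)
    have h3 : ∑ k, f k = (∑ k, A k (σ k) * p k * q (σ k))
        - (∑ k, Real.log (p k)) - (∑ k, Real.log (q (σ k))) := by
      simp [hf, Finset.sum_sub_distrib]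
    rw [h3, h2]
    linarith
  -- isolate f i
  have hi : f i ≤ c₀ - ((n : ℝ) - 1) * (1 + Real.log δ) := by
    have hsplit : ∑ k, f k = f i + ∑ k ∈ Finset.univ.erase i, f k :=
      (Finset.add_sum_erase _ f (Finset.mem_univ i)).symm
    have hlb : ((n : ℝ) - 1) * (1 + Real.log δ) ≤ ∑ k ∈ Finset.univ.erase i, f k := by
      have hcard : (Finset.univ.erase i).card = n - 1 := by
        simp [Finset.card_erase_of_mem]
      have h := Finset.sum_le_sum (f := fun _ : Fin n => 1 + Real.log δ) (g := f)
        (s := Finset.univ.erase i) (fun k _ => hfk k)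
      rw [Finset.sum_const, hcard, nsmul_eq_mul] at h
      have hn : 1 ≤ n := by
        have := i.pos
        omega
      have : ((n - 1 : ℕ) : ℝ) = (n : ℝ) - 1 := by
        push_cast [hn]; ring
      rw [this] at h
      linarith [h]
    linarith [hsplit ▸ hsum]
  have hfi : f i = A i j * p i * q j - Real.log (p i * q j) := by
    simp only [hf, hσi, Real.log_mul (hp i).ne' (hq j).ne']
    ring
  rw [hfi] at hi
  refine ⟨hi, ?_⟩
  have hpos : 0 < A i j * p i * q j :=
    mul_pos (mul_pos hij (hp i)) (hq j)
  have hlog : -c₀ + ((n : ℝ) - 1) * (1 + Real.log δ) ≤ Real.log (p i * q j) := by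
    linarith
  calc Real.exp (-c₀ + ((n : ℝ) - 1) * (1 + Real.log δ))
      ≤ Real.exp (Real.log (p i * q j)) := Real.exp_le_exp.2 hlog
    _ = p i * q j := Real.exp_log (mul_pos (hp i) (hq j))
end

section
/- Let Y be an n×n real matrix with all entries positive, and let W be the symmetric (2n)×(2n) block matrix W = [[diag(Y 1_n), Y], [Y^T, diag(Y^T 1_n)]]. Then the null space of W is exactly the one-dimensional span of the vector (1_n, −1_n); consequently W has rank 2n − 1. Moreover, for every n×n real matrix R, the linear system W(u,v) = (row sums of Y ⊙ R, column sums of Y ⊙ R) is consistent, where ⊙ denotes the entrywise product. -/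
open Finset Matrix

private lemma stmt12_comp (n : ℕ) (Y : Matrix (Fin n) (Fin n) ℝ)
    (W : Matrix (Fin n ⊕ Fin n) (Fin n ⊕ Fin n) ℝ)
    (hW : W = Matrix.fromBlocks
      (Matrix.diagonal fun i => ∑ j, Y i j) Y
      Yᵀ (Matrix.diagonal fun j => ∑ i, Y i j)) :
    ∀ w : Fin n ⊕ Fin n → ℝ, W *ᵥ w = Sum.elim
      (fun i => ∑ j, Y i j * (w (Sum.inl i) + w (Sum.inr j)))
      (fun j => ∑ i, Y i j * (w (Sum.inl i) + w (Sum.inr j))) := by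
  intro w
  funext k
  rcases k with i | j <;>
    simp [hW, mulVec, dotProduct, Fintype.sum_sum_type, diagonal, mul_add,
      Finset.sum_add_distrib, Finset.sum_ite_eq, Finset.mul_sum, Finset.sum_mul]

/-- for an entrywise-positive matrix `Y`, the Schur complement
matrix `W = [[diag(Y1), Y],[Yᵀ, diag(Yᵀ1)]]` has null space exactly the span of
`(1_n, −1_n)`, has rank `2n − 1`, and for every matrix `R` the system
`W (u,v) = (row sums of Y⊙R, column sums of Y⊙R)` is consistent. -/
theorem stmt12 (n : ℕ) (Y : Matrix (Fin n) (Fin n) ℝ) (hY : ∀ i j, 0 < Y i j)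
    (W : Matrix (Fin n ⊕ Fin n) (Fin n ⊕ Fin n) ℝ)
    (hW : W = Matrix.fromBlocks
      (Matrix.diagonal fun i => ∑ j, Y i j) Y
      Yᵀ (Matrix.diagonal fun j => ∑ i, Y i j)) :
    (∀ w : Fin n ⊕ Fin n → ℝ, W *ᵥ w = 0 ↔
        ∃ c : ℝ, w = c • Sum.elim (fun _ => (1 : ℝ)) fun _ => (-1 : ℝ))
    ∧ W.rank = 2 * n - 1
    ∧ ∀ R : Matrix (Fin n) (Fin n) ℝ, ∃ w : Fin n ⊕ Fin n → ℝ,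
        W *ᵥ w = Sum.elim (fun i => ∑ j, Y i j * R i j) fun j => ∑ i, Y i j * R i j := by
  have hcomp := stmt12_comp n Y W hW
  set z : Fin n ⊕ Fin n → ℝ := Sum.elim (fun _ => (1 : ℝ)) fun _ => (-1 : ℝ) with hz
  -- W is symmetric
  have hsymm : Wᵀ = W := by
    rw [hW]
    simp [fromBlocks_transpose, diagonal_transpose]
  -- z is in the kernel
  have hWz : W *ᵥ z = 0 := by
    rw [hcomp z]
    funext k
    rcases k with i | j <;> simp [hz]
  -- kernel elements satisfy w(inl i) + w(inr j) = 0
  have hker : ∀ w : Fin n ⊕ Fin n → ℝ, W *ᵥ w = 0 →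
      ∀ i j, w (Sum.inl i) + w (Sum.inr j) = 0 := by
    intro w h
    rw [hcomp w] at h
    have h1 : ∀ i, ∑ j, Y i j * (w (Sum.inl i) + w (Sum.inr j)) = 0 := fun i =>
      congrFun h (Sum.inl i)
    have h2 : ∀ j, ∑ i, Y i j * (w (Sum.inl i) + w (Sum.inr j)) = 0 := fun j =>
      congrFun h (Sum.inr j)
    have hq : ∑ i, ∑ j, Y i j * (w (Sum.inl i) + w (Sum.inr j)) ^ 2 = 0 := by
      have key : ∀ i j, Y i j * (w (Sum.inl i) + w (Sum.inr j)) ^ 2 =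
          w (Sum.inl i) * (Y i j * (w (Sum.inl i) + w (Sum.inr j))) +
          w (Sum.inr j) * (Y i j * (w (Sum.inl i) + w (Sum.inr j))) := by
        intro i j; ring
      calc ∑ i, ∑ j, Y i j * (w (Sum.inl i) + w (Sum.inr j)) ^ 2
          = (∑ i, ∑ j, w (Sum.inl i) * (Y i j * (w (Sum.inl i) + w (Sum.inr j)))) +
            ∑ i, ∑ j, w (Sum.inr j) * (Y i j * (w (Sum.inl i) + w (Sum.inr j))) := by
            simp only [key, Finset.sum_add_distrib]
        _ = (∑ i, w (Sum.inl i) * ∑ j, Y i j * (w (Sum.inl i) + w (Sum.inr j))) +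
            ∑ j, w (Sum.inr j) * ∑ i, Y i j * (w (Sum.inl i) + w (Sum.inr j)) := by
            rw [Finset.sum_comm (f := fun i j => w (Sum.inr j) *
              (Y i j * (w (Sum.inl i) + w (Sum.inr j))))]
            simp only [Finset.mul_sum]
        _ = 0 := by simp [h1, h2]
    intro i j
    have hnn : ∀ i ∈ Finset.univ (α := Fin n),
        (0:ℝ) ≤ ∑ j, Y i j * (w (Sum.inl i) + w (Sum.inr j)) ^ 2 := by
      intro i _
      exact Finset.sum_nonneg fun j _ =>
        mul_nonneg (hY i j).le (sq_nonneg _)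
    have hrow0 : ∑ j, Y i j * (w (Sum.inl i) + w (Sum.inr j)) ^ 2 = 0 :=
      (Finset.sum_eq_zero_iff_of_nonneg hnn).mp hq i (Finset.mem_univ i)
    have hterm : Y i j * (w (Sum.inl i) + w (Sum.inr j)) ^ 2 = 0 :=
      (Finset.sum_eq_zero_iff_of_nonneg fun j _ =>
        mul_nonneg (hY i j).le (sq_nonneg _)).mp hrow0 j (Finset.mem_univ j)
    have := (mul_eq_zero.mp hterm).resolve_left (hY i j).ne'
    exact (pow_eq_zero_iff two_ne_zero).mp this
  -- the kernel iff
  have hiff : ∀ w : Fin n ⊕ Fin n → ℝ, W *ᵥ w = 0 ↔ ∃ c : ℝ, w = c • z := by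
    intro w
    constructor
    · intro h
      rcases Nat.eq_zero_or_pos n with hn | hn
      · refine ⟨0, funext fun k => ?_⟩
        subst hn
        rcases k with i | i <;> exact i.elim0
      · have i0 : Fin n := ⟨0, hn⟩
        refine ⟨w (Sum.inl i0), funext fun k => ?_⟩
        rcases k with i | j
        · have e1 := hker w h i i0
          have e2 := hker w h i0 i0
          simp [hz]
          linarith
        · have e2 := hker w h i0 j
          simp [hz]
          linarith
    · rintro ⟨c, rfl⟩
      rw [mulVec_smul, hWz, smul_zero]
  -- the kernel as a submodule
  have hkerM : LinearMap.ker W.mulVecLin = (ℝ ∙ z) := by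
    ext w
    rw [LinearMap.mem_ker, Matrix.mulVecLin_apply, hiff w, Submodule.mem_span_singleton]
    constructor
    · rintro ⟨c, rfl⟩; exact ⟨c, rfl⟩
    · rintro ⟨c, rfl⟩; exact ⟨c, rfl⟩
  -- rank
  have hrank : W.rank = 2 * n - 1 := by
    rcases Nat.eq_zero_or_pos n with hn | hn
    · have := W.rank_le_card_width
      subst hn
      simp at this
      simp [this]
    · have hzne : z ≠ 0 := by
        intro hz0
        have := congrFun hz0 (Sum.inl ⟨0, hn⟩)
        simp [hz] at this
      have hk1 : Module.finrank ℝ (LinearMap.ker W.mulVecLin) = 1 := by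
        rw [hkerM]; exact finrank_span_singleton hzne
      have hrn := LinearMap.finrank_range_add_finrank_ker W.mulVecLin
      rw [hk1, Module.finrank_fintype_fun_eq_card] at hrn
      simp [Fintype.card_sum] at hrn
      have : W.rank = n + n - 1 := by
        rw [Matrix.rank]; omega
      omega
  refine ⟨hiff, hrank, ?_⟩
  -- consistency
  intro R
  rcases Nat.eq_zero_or_pos n with hn | hn
  · refine ⟨0, funext fun k => ?_⟩
    subst hn
    rcases k with i | i <;> exact i.elim0
  · set b : Fin n ⊕ Fin n → ℝ :=
      Sum.elim (fun i => ∑ j, Y i j * R i j) fun j => ∑ i, Y i j * R i j with hb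
    let f : (Fin n ⊕ Fin n → ℝ) →ₗ[ℝ] ℝ :=
      { toFun := fun x => x ⬝ᵥ z
        map_add' := fun x y => add_dotProduct x y z
        map_smul' := fun c x => smul_dotProduct c x z }
    have hfapp : ∀ x : Fin n ⊕ Fin n → ℝ,
        f x = (∑ i, x (Sum.inl i)) - ∑ j, x (Sum.inr j) := by
      intro x
      show x ⬝ᵥ z = _
      simp [dotProduct, hz, Fintype.sum_sum_type, sub_eq_add_neg]
    have hfsurj : Function.Surjective f := by
      intro r
      have hfz : f z = 2 * n := by
        rw [hfapp]
        simp [hz]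
        ring
      have h2n : (2 * n : ℝ) ≠ 0 := by
        have : (0:ℝ) < n := by exact_mod_cast hn
        positivity
      exact ⟨(r / (2 * n)) • z, by rw [f.map_smul, hfz, smul_eq_mul]; field_simp⟩
    have hkf : Module.finrank ℝ (LinearMap.ker f) = 2 * n - 1 := by
      have hrn := LinearMap.finrank_range_add_finrank_ker f
      rw [LinearMap.range_eq_top.mpr hfsurj, Module.finrank_fintype_fun_eq_card] at hrn
      simp [Fintype.card_sum, finrank_top, Module.finrank_self] at hrn
      omega
    have hle : LinearMap.range W.mulVecLin ≤ LinearMap.ker f := by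
      rintro x ⟨u, rfl⟩
      show (W *ᵥ u) ⬝ᵥ z = 0
      rw [dotProduct_comm, dotProduct_mulVec, ← mulVec_transpose, hsymm, hWz]
      simp
    have heq : LinearMap.range W.mulVecLin = LinearMap.ker f := by
      apply Submodule.eq_of_le_of_finrank_eq hle
      rw [hkf]
      exact hrank
    have hbmem : b ∈ LinearMap.ker f := by
      rw [LinearMap.mem_ker, hfapp]
      simp only [hb, Sum.elim_inl, Sum.elim_inr]
      rw [Finset.sum_comm]
      ring
    rw [← heq] at hbmem
    obtain ⟨w, hw⟩ := hbmem
    exact ⟨w, hw⟩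
end

section
/- Let t > 0, γ' ∈ (0,1), γ'' ∈ (1,∞), C an n×n real cost matrix, X an n×n matrix with all entries positive, and ν_t = (u_t, v_t) ∈ ℝ^n × ℝ^n such that γ' < t·X_{ij}·(C_{ij} − u_t(i) − v_t(j)) < γ'' for all i,j. Suppose 𝒥 is a permutation of {1,…,n} such that X_{ij} ≤ (γ'/γ'')·X_{i,𝒥(i)} for every i and every j ≠ 𝒥(i). Define ν = (u, v) by v_j := v_t(j) and u_i := C_{i,𝒥(i)} − v_t(𝒥(i)). Then s_{ij} := C_{ij} − u_i − v_j ≥ 0 for all i,j, with s_{i,𝒥(i)} = 0 for all i. Consequently, the permutation matrix X̃ of 𝒥 (X̃_{i,𝒥(i)} = 1, other entries 0) satisfies ⟨C, X̃⟩ = ⟨ν, 1⟩, and X̃ minimizes ⟨C, X'⟩ over all doubly stochastic n×n matrices X'. -/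
open Finset

/-- early termination: if `(X, ν_t)` is an approximate KKT point
with `γ' < t·X_{ij}(C_{ij} − u_t(i) − v_t(j)) < γ''` and one diagonal `𝒥`
dominates (`X_{ij} ≤ (γ'/γ'') X_{i,𝒥(i)}` for `j ≠ 𝒥(i)`), then the rounded dual
vector `ν = (u,v)` with `v = v_t`, `u_i = C_{i,𝒥(i)} − v_t(𝒥(i))` has nonnegative
slack, zero slack on the diagonal, the permutation matrix `X̃` of `𝒥` satisfies
`⟨C, X̃⟩ = ⟨ν,1⟩`, and `X̃` minimizes `⟨C, ·⟩` over doubly stochastic matrices. -/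
theorem stmt14 (n : ℕ) (t : ℝ) (ht : 0 < t)
    (γ' γ'' : ℝ) (hγ' : γ' ∈ Set.Ioo (0 : ℝ) 1) (hγ'' : 1 < γ'')
    (C X : Matrix (Fin n) (Fin n) ℝ) (hX : ∀ i j, 0 < X i j)
    (ut vt : Fin n → ℝ)
    (hKKT : ∀ i j, γ' < t * X i j * (C i j - ut i - vt j)
      ∧ t * X i j * (C i j - ut i - vt j) < γ'')
    (J : Equiv.Perm (Fin n))
    (hdom : ∀ i j, j ≠ J i → X i j ≤ γ' / γ'' * X i (J i))
    (u v : Fin n → ℝ) (hv : v = vt) (hu : ∀ i, u i = C i (J i) - vt (J i))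
    (Xt : Matrix (Fin n) (Fin n) ℝ)
    (hXt : ∀ i j, Xt i j = if j = J i then 1 else 0) :
    (∀ i j, 0 ≤ C i j - u i - v j)
    ∧ (∀ i, C i (J i) - u i - v (J i) = 0)
    ∧ (∑ i, ∑ j, C i j * Xt i j) = (∑ i, u i) + (∑ j, v j)
    ∧ ∀ X' : Matrix (Fin n) (Fin n) ℝ,
        (∀ i j, 0 ≤ X' i j) → (∀ i, ∑ j, X' i j = 1) → (∀ j, ∑ i, X' i j = 1) →
        (∑ i, ∑ j, C i j * Xt i j) ≤ ∑ i, ∑ j, C i j * X' i j := by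
  subst hv
  obtain ⟨hγ0, hγ1⟩ := hγ'
  have hγ''0 : (0:ℝ) < γ'' := by linarith
  -- nonnegative slack
  have key : ∀ i j, 0 ≤ C i j - u i - v j := by
    intro i j
    rw [hu]
    by_cases h : j = J i
    · subst h; simp
    · have h1 := (hKKT i j).1
      have h2 := (hKKT i (J i)).2
      have hx1 := hX i j
      have hx2 := hX i (J i)
      have p1 : (0:ℝ) < t * X i j := mul_pos ht hx1
      have p2 : (0:ℝ) < t * X i (J i) := mul_pos ht hx2
      have a1 : γ' / (t * X i j) < C i j - ut i - v j := by
        rw [div_lt_iff₀ p1]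
        nlinarith [h1]
      have a2 : C i (J i) - ut i - v (J i) < γ'' / (t * X i (J i)) := by
        rw [lt_div_iff₀ p2]
        nlinarith [h2]
      have hd : X i j ≤ γ' / γ'' * X i (J i) := hdom i j h
      have hd' : X i j * γ'' ≤ γ' * X i (J i) := by
        rw [div_mul_eq_mul_div, le_div_iff₀ hγ''0] at hd
        exact hd
      have a3 : γ'' / (t * X i (J i)) ≤ γ' / (t * X i j) := by
        rw [div_le_div_iff₀ p2 p1]
        nlinarith [mul_nonneg ht.le (sub_nonneg.2 hd')]
      linarith
  refine ⟨key, ?_, ?_, ?_⟩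
  · intro i; rw [hu]; ring
  · -- value equality
    have hrow : ∀ i, (∑ j, C i j * Xt i j) = C i (J i) := by
      intro i
      simp [hXt, mul_ite]
    calc (∑ i, ∑ j, C i j * Xt i j) = ∑ i, C i (J i) := by
          simp_rw [hrow]
      _ = ∑ i, (u i + v (J i)) := by
          apply Finset.sum_congr rfl
          intro i _
          rw [hu]; ring
      _ = (∑ i, u i) + ∑ i, v (J i) := Finset.sum_add_distrib
      _ = (∑ i, u i) + ∑ j, v j := by rw [Equiv.sum_comp J v]
  · intro X' hpos hrow' hcol'
    have hrowXt : ∀ i, (∑ j, C i j * Xt i j) = C i (J i) := by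
      intro i; simp [hXt, mul_ite]
    have hval : (∑ i, ∑ j, C i j * Xt i j) = (∑ i, u i) + ∑ j, v j := by
      calc (∑ i, ∑ j, C i j * Xt i j) = ∑ i, C i (J i) := by simp_rw [hrowXt]
        _ = ∑ i, (u i + v (J i)) := by
            apply Finset.sum_congr rfl; intro i _; rw [hu]; ring
        _ = (∑ i, u i) + ∑ i, v (J i) := Finset.sum_add_distrib
        _ = (∑ i, u i) + ∑ j, v j := by rw [Equiv.sum_comp J v]
    rw [hval]
    have e1 : ∑ i, ∑ j, (u i + v j) * X' i j = (∑ i, u i) + ∑ j, v j := by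
      have : ∀ i, ∑ j, (u i + v j) * X' i j
          = u i * (∑ j, X' i j) + ∑ j, v j * X' i j := by
        intro i
        rw [Finset.mul_sum, ← Finset.sum_add_distrib]
        apply Finset.sum_congr rfl; intro j _; ring
      simp_rw [this, hrow', mul_one]
      rw [Finset.sum_add_distrib]
      congr 1
      rw [Finset.sum_comm]
      apply Finset.sum_congr rfl
      intro j _
      rw [← Finset.mul_sum, hcol' j, mul_one]
    rw [← e1]
    apply Finset.sum_le_sum
    intro i _
    apply Finset.sum_le_sum
    intro j _
    have := key i j
    nlinarith [hpos i j, mul_nonneg (hpos i j) (sub_nonneg.2 (by linarith : u i + v j ≤ C i j))]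
end

section
/- Let A be an n×n real matrix with all entries positive and let q ∈ ℝ^n be entrywise positive. Then the function p ↦ g(p, q), over entrywise-positive p ∈ ℝ^n, attains its unique global minimum at the vector p* given by p*_i = 1/(A q)_i for i = 1,…,n. In other words, each half-step of the Sinkhorn–Knopp iteration p ← (A q)^{-1} is an exact coordinate-wise minimization of g, so the Sinkhorn–Knopp algorithm monotonically decreases g. -/
open Finset

lemma stmt17_key (s x : ℝ) (hs : 0 < s) (hx : 0 < x) :
    s⁻¹ * s - Real.log s⁻¹ ≤ x * s - Real.log x ∧
    (x ≠ s⁻¹ → s⁻¹ * s - Real.log s⁻¹ < x * s - Real.log x) := by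
  have hxs : 0 < x * s := mul_pos hx hs
  have hlog : Real.log (x * s) = Real.log x + Real.log s :=
    Real.log_mul (ne_of_gt hx) (ne_of_gt hs)
  have hinv : s⁻¹ * s = 1 := inv_mul_cancel₀ (ne_of_gt hs)
  have hloginv : Real.log s⁻¹ = -Real.log s := Real.log_inv s
  constructor
  · have := Real.log_le_sub_one_of_pos hxs
    nlinarith [hlog, hinv, hloginv]
  · intro hne
    have hne1 : x * s ≠ 1 := by
      intro h
      apply hne
      field_simp
      linarith [h]
    have := Real.log_lt_sub_one_of_pos hxs hne1
    nlinarith [hlog, hinv, hloginv]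

/-- for an entrywise-positive matrix `A` and positive `q`, the map
`p ↦ g(p,q) = Σ A_{ij} p_i q_j − Σ log p_i − Σ log q_j` over entrywise-positive
`p` attains its unique global minimum at `p*` with `p*_i = 1/(Aq)_i`; i.e. each
Sinkhorn–Knopp half-step is an exact coordinate-wise minimization of `g`. -/
theorem stmt17 (n : ℕ) (A : Matrix (Fin n) (Fin n) ℝ) (hA : ∀ i j, 0 < A i j)
    (q : Fin n → ℝ) (hq : ∀ j, 0 < q j)
    (pstar : Fin n → ℝ) (hpstar : ∀ i, pstar i = (∑ j, A i j * q j)⁻¹) :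
    ∀ p : Fin n → ℝ, (∀ i, 0 < p i) →
      ((∑ i, ∑ j, A i j * pstar i * q j) - (∑ i, Real.log (pstar i))
          - (∑ j, Real.log (q j))
        ≤ (∑ i, ∑ j, A i j * p i * q j) - (∑ i, Real.log (p i))
          - ∑ j, Real.log (q j))
      ∧ (p ≠ pstar →
        (∑ i, ∑ j, A i j * pstar i * q j) - (∑ i, Real.log (pstar i))
            - (∑ j, Real.log (q j))
          < (∑ i, ∑ j, A i j * p i * q j) - (∑ i, Real.log (p i))
            - ∑ j, Real.log (q j)) := by
  intro p hp
  set s : Fin n → ℝ := fun i => ∑ j, A i j * q j with hsdef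
  have hspos : ∀ i, 0 < s i := fun i =>
    Finset.sum_pos (fun j _ => mul_pos (hA i j) (hq j)) ⟨i, Finset.mem_univ i⟩
  have hps : ∀ i, pstar i = (s i)⁻¹ := hpstar
  have hsum : ∀ (p' : Fin n → ℝ), ∑ i, ∑ j, A i j * p' i * q j = ∑ i, p' i * s i := by
    intro p'
    refine Finset.sum_congr rfl fun i _ => ?_
    rw [Finset.mul_sum]
    exact Finset.sum_congr rfl fun j _ => by ring
  have hkey := fun i => stmt17_key (s i) (p i) (hspos i) (hp i)
  have hle : ∀ i ∈ Finset.univ,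
      pstar i * s i - Real.log (pstar i) ≤ p i * s i - Real.log (p i) := by
    intro i _
    rw [hps i]
    exact (hkey i).1
  rw [hsum pstar, hsum p]
  have hsub : ∀ (p' : Fin n → ℝ),
      (∑ i, p' i * s i) - (∑ i, Real.log (p' i))
        = ∑ i, (p' i * s i - Real.log (p' i)) := by
    intro p'; rw [Finset.sum_sub_distrib]
  constructor
  · have := Finset.sum_le_sum hle
    rw [hsub pstar, hsub p] at *
    linarith
  · intro hne
    obtain ⟨i0, hi0⟩ := Function.ne_iff.mp hne
    have hlt : ∑ i, (pstar i * s i - Real.log (pstar i))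
        < ∑ i, (p i * s i - Real.log (p i)) := by
      refine Finset.sum_lt_sum hle ⟨i0, Finset.mem_univ i0, ?_⟩
      rw [hps i0]
      refine (hkey i0).2 ?_
      rw [← hps i0]; exact hi0
    rw [hsub pstar, hsub p] at *
    linarith
end
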